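/- In a triangle-free graph G without isolated vertices, the open neighborhood of any vertex is an independent mutual-visibility set; hence μ_i(G) ≥ Δ(G). -/

import Mathlib

open SimpleGraph

variable {V W : Type*}

/-- Two vertices of `X` are `X`-visible if some geodesic between them has all
internal vertices outside `X`; `X` is a mutual-visibility set if this holds
for every reachable pair of vertices of `X`. -/
def IsMVSet (G : SimpleGraph V) (X : Set V) : Prop :=
  ∀ x ∈ X, ∀ y ∈ X, x ≠ y → G.Reachable x y →
    ∃ p : G.Walk x y, p.length = G.dist x y ∧
      ∀ z ∈ p.support, z ≠ x → z ≠ y → z ∉ X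

/-- An independent mutual-visibility set. -/
def IsIMVSet (G : SimpleGraph V) (X : Set V) : Prop :=
  (∀ x ∈ X, ∀ y ∈ X, ¬ G.Adj x y) ∧ IsMVSet G X

/-- The mutual-visibility chromatic number: the least `k` such that the vertex
set partitions into `k` mutual-visibility sets. -/
noncomputable def mvChrom (G : SimpleGraph V) : ℕ :=
  sInf {k | ∃ f : V → Fin k, ∀ i, IsMVSet G (f ⁻¹' {i})}

/-- The independent mutual-visibility chromatic number. -/
noncomputable def imvChrom (G : SimpleGraph V) : ℕ :=
  sInf {k | ∃ f : V → Fin k, ∀ i, IsIMVSet G (f ⁻¹' {i})}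

/-- The chromatic number, as a natural number. -/
noncomputable def chromNat (G : SimpleGraph V) : ℕ :=
  sInf {k | G.Colorable k}

/-- The independent mutual-visibility number `μᵢ(G)`. -/
noncomputable def imvNum (G : SimpleGraph V) : ℕ :=
  sSup {n | ∃ s : Finset V, IsIMVSet G ↑s ∧ s.card = n}

/-- The independence number `α(G)`. -/
noncomputable def indepNum (G : SimpleGraph V) : ℕ :=
  sSup {n | ∃ s : Finset V, (∀ x ∈ s, ∀ y ∈ s, ¬ G.Adj x y) ∧ s.card = n}

namespace SimpleGraph

variable {G : SimpleGraph V}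

theorem not_adj_of_mem_neighborSet_of_cliqueFree (htf : G.CliqueFree 3) {v x y : V}
    (hx : x ∈ G.neighborSet v) (hy : y ∈ G.neighborSet v) : ¬ G.Adj x y := fun hxy => by
  classical exact htf {v, x, y} (is3Clique_triple_iff.2 ⟨hx, hy, hxy⟩)

theorem dist_eq_two_of_adj_of_adj {v x y : V} (hx : G.Adj v x) (hy : G.Adj v y) (hne : x ≠ y)
    (hxy : ¬ G.Adj x y) : G.dist x y = 2 := by
  have hedist : G.edist x y = 2 :=
    edist_eq_two_iff.2 ⟨hne, hxy, ⟨v, G.mem_commonNeighbors.2 ⟨hx.symm, hy.symm⟩⟩⟩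
  simp [dist, hedist]

end SimpleGraph

/-- Two neighbours of `v` are either adjacent or at distance two through `v`, and `v` itself is
not a neighbour of `v`. -/
theorem isMVSet_neighborSet (G : SimpleGraph V) (v : V) : IsMVSet G (G.neighborSet v) := by
  intro x (hx : G.Adj v x) y (hy : G.Adj v y) hne _
  by_cases hxy : G.Adj x y
  · refine ⟨hxy.toWalk, by rw [hxy.length_toWalk, dist_eq_one_iff_adj.2 hxy], ?_⟩
    simp_all
  · refine ⟨Walk.cons hx.symm (Walk.cons hy .nil),
      (dist_eq_two_of_adj_of_adj hx hy hne hxy).symm, ?_⟩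
    intro z hz hzx hzy
    simp only [Walk.support_cons, Walk.support_nil, List.mem_cons, List.not_mem_nil,
      or_false] at hz
    obtain rfl : z = v := by tauto
    exact G.loopless.irrefl z

theorem isIMVSet_neighborSet {G : SimpleGraph V} (htf : G.CliqueFree 3) (v : V) :
    IsIMVSet G (G.neighborSet v) :=
  ⟨fun _ hx _ hy => not_adj_of_mem_neighborSet_of_cliqueFree htf hx hy, isMVSet_neighborSet G v⟩

theorem card_le_imvNum [Fintype V] {G : SimpleGraph V} {s : Finset V} (hs : IsIMVSet G s) :
    s.card ≤ imvNum G :=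
  le_csSup ⟨Fintype.card V, fun _ ⟨t, _, ht⟩ => ht ▸ t.card_le_univ⟩ ⟨s, hs, rfl⟩

theorem stmt8 [Fintype V] (G : SimpleGraph V) [DecidableRel G.Adj]
    (htf : G.CliqueFree 3) :
    (∀ v : V, IsIMVSet G (G.neighborSet v)) ∧ G.maxDegree ≤ imvNum G := by
  refine ⟨isIMVSet_neighborSet htf, G.maxDegree_le_of_forall_degree_le _ fun v => ?_⟩
  rw [← card_neighborFinset_eq_degree]
  exact card_le_imvNum (by rw [coe_neighborFinset]; exact isIMVSet_neighborSet htf v)
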